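/- arXiv:2306.15180 — 3 statements merged into one kernel-verified Lean document; each statement's English description precedes it below -/
import Mathlib

section
/- Let X be a set and F₁, F₂ : X → ℝ bounded below, with β₁* < inf F₁, β₂* < inf F₂. If x* is a weak Pareto minimum of (F₁,F₂), then there exist weights w₁, w₂ > 0 with w₁ + w₂ = 1 such that x* minimizes x ↦ max{w₁(F₁(x) − β₁*), w₂(F₂(x) − β₂*)} over X; indeed one may take w₁ = (F₂(x*) − β₂*)/((F₁(x*) − β₁*) + (F₂(x*) − β₂*)) and w₂ = 1 − w₁. -/
/-
Put `a = F₁(x*) - β₁* > 0` and `b = F₂(x*) - β₂* > 0`. The weights `w₁ = b/(a+b)`,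
`w₂ = a/(a+b)` balance the two terms at `x*`, `w₁ a = w₂ b`, so the Chebyshev value at `x*` is
this common value. Weak Pareto minimality says every `x` is at least as bad as `x*` in one
coordinate, which already makes the corresponding weighted term at `x` at least as large.
-/

lemma max_mul_le_max_mul_of_mul_eq {α : Type*} [Semiring α] [LinearOrder α] [PosMulMono α]
    {w₁ w₂ a b a' b' : α} (hw₁ : 0 ≤ w₁) (hw₂ : 0 ≤ w₂) (hbal : w₁ * a = w₂ * b)
    (h : a ≤ a' ∨ b ≤ b') :
    max (w₁ * a) (w₂ * b) ≤ max (w₁ * a') (w₂ * b') := by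
  rw [← hbal, max_self]
  rcases h with h | h
  · exact le_max_of_le_left (mul_le_mul_of_nonneg_left h hw₁)
  · exact le_max_of_le_right (hbal ▸ mul_le_mul_of_nonneg_left h hw₂)

theorem stmt_13_general (X : Type*) (F1 F2 : X → ℝ)
    (β1 β2 : ℝ)
    (hb1 : BddBelow (Set.range F1)) (hb2 : BddBelow (Set.range F2))
    (hβ1 : β1 < ⨅ x, F1 x) (hβ2 : β2 < ⨅ x, F2 x)
    (xs : X)
    (hweak : ¬ ∃ x : X, F1 x < F1 xs ∧ F2 x < F2 xs) :
    ∃ w1 w2 : ℝ, 0 < w1 ∧ 0 < w2 ∧ w1 + w2 = 1 ∧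
      w1 = (F2 xs - β2) / ((F1 xs - β1) + (F2 xs - β2)) ∧
      ∀ x : X,
        max (w1 * (F1 xs - β1)) (w2 * (F2 xs - β2)) ≤
          max (w1 * (F1 x - β1)) (w2 * (F2 x - β2)) := by
  set a := F1 xs - β1
  set b := F2 xs - β2
  have ha : 0 < a := sub_pos.2 (hβ1.trans_le (ciInf_le hb1 xs))
  have hb : 0 < b := sub_pos.2 (hβ2.trans_le (ciInf_le hb2 xs))
  have hab : 0 < a + b := add_pos ha hb
  refine ⟨b / (a + b), a / (a + b), div_pos hb hab, div_pos ha hab, ?_, rfl, fun x => ?_⟩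
  · rw [← add_div, add_comm, div_self hab.ne']
  have hpareto : F1 xs ≤ F1 x ∨ F2 xs ≤ F2 x := by
    by_contra! h
    exact hweak ⟨x, h⟩
  exact max_mul_le_max_mul_of_mul_eq (div_pos hb hab).le (div_pos ha hab).le (by ring)
    (hpareto.imp (sub_le_sub_right · β1) (sub_le_sub_right · β2))

theorem stmt_13 (X : Type*) [Nonempty X] (F1 F2 : X → ℝ)
    (β1 β2 : ℝ)
    (hb1 : BddBelow (Set.range F1)) (hb2 : BddBelow (Set.range F2))
    (hβ1 : β1 < ⨅ x, F1 x) (hβ2 : β2 < ⨅ x, F2 x)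
    (xs : X)
    (hweak : ¬ ∃ x : X, F1 x < F1 xs ∧ F2 x < F2 xs) :
    ∃ w1 w2 : ℝ, 0 < w1 ∧ 0 < w2 ∧ w1 + w2 = 1 ∧
      w1 = (F2 xs - β2) / ((F1 xs - β1) + (F2 xs - β2)) ∧
      ∀ x : X,
        max (w1 * (F1 xs - β1)) (w2 * (F2 xs - β2)) ≤
          max (w1 * (F1 x - β1)) (w2 * (F2 x - β2)) :=
  stmt_13_general X F1 F2 β1 β2 hb1 hb2 hβ1 hβ2 xs hweak
end

section
/- Let x(t,w) be a two-parameter family of smooth curves in ℝⁿ satisfying, for each w ∈ (0,1), the Euler–Lagrange equation x⁽⁴⁾(t,w) − τ(w)·ẍ(t,w) = 0 with fixed (w-independent) boundary data x(t₀,w) = x₀, ẋ(t₀,w) = v₀, x(t_f,w) = x₁, ẋ(t_f,w) = v₁, where τ(w) = w/(1−w), and assume x is smooth in both variables. Define F₁(w) = ∫_{t₀}^{t_f} ‖ẋ(t,w)‖² dt and F₂(w) = ∫_{t₀}^{t_f} ‖ẍ(t,w)‖² dt. Then F₂'(w) = −τ(w)·F₁'(w), and equivalently F₁'(w) = −2∫_{t₀}^{t_f}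 ⟨ẍ(t,w), ∂_w x(t,w)⟩ dt. -/
set_option linter.unusedSectionVars false
open Set MeasureTheory Filter Topology
open scoped RealInnerProductSpace

variable {E : Type*} [NormedAddCommGroup E] [InnerProductSpace ℝ E] [CompleteSpace E]

noncomputable def pt (F : ℝ × ℝ → E) (p : ℝ × ℝ) : E := fderiv ℝ F p (1, 0)
noncomputable def pw (F : ℝ × ℝ → E) (p : ℝ × ℝ) : E := fderiv ℝ F p (0, 1)

lemma contDiff_pt {F : ℝ × ℝ → E} (hF : ContDiff ℝ (⊤ : ℕ∞) F) : ContDiff ℝ (⊤ : ℕ∞) (pt F) :=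
  (hF.fderiv_right (by simp)).clm_apply contDiff_const

lemma contDiff_pw {F : ℝ × ℝ → E} (hF : ContDiff ℝ (⊤ : ℕ∞) F) : ContDiff ℝ (⊤ : ℕ∞) (pw F) :=
  (hF.fderiv_right (by simp)).clm_apply contDiff_const

lemma hasDerivAt_slice_t {F : ℝ × ℝ → E} (hF : ContDiff ℝ (⊤ : ℕ∞) F) (t w : ℝ) :
    HasDerivAt (fun s => F (s, w)) (pt F (t, w)) t := by
  have h1 : HasFDerivAt F (fderiv ℝ F (t, w)) (t, w) :=
    ((hF.differentiable (by simp)) (t, w)).hasFDerivAt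
  have h2 : HasDerivAt (fun s : ℝ => (s, w)) ((1 : ℝ), (0 : ℝ)) t :=
    (hasDerivAt_id t).prodMk (hasDerivAt_const t w)
  exact h1.comp_hasDerivAt t h2

lemma hasDerivAt_slice_w {F : ℝ × ℝ → E} (hF : ContDiff ℝ (⊤ : ℕ∞) F) (t w : ℝ) :
    HasDerivAt (fun w' => F (t, w')) (pw F (t, w)) w := by
  have h1 : HasFDerivAt F (fderiv ℝ F (t, w)) (t, w) :=
    ((hF.differentiable (by simp)) (t, w)).hasFDerivAt
  have h2 : HasDerivAt (fun w' : ℝ => (t, w')) ((0 : ℝ), (1 : ℝ)) w :=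
    (hasDerivAt_const w t).prodMk (hasDerivAt_id w)
  exact h1.comp_hasDerivAt w h2

lemma pw_pt_eq {F : ℝ × ℝ → E} (hF : ContDiff ℝ (⊤ : ℕ∞) F) (p : ℝ × ℝ) :
    pw (pt F) p = pt (pw F) p := by
  have hd : ∀ q, HasFDerivAt F (fderiv ℝ F q) q :=
    fun q => ((hF.differentiable (by simp)) q).hasFDerivAt
  have hf' : ContDiff ℝ (⊤ : ℕ∞) (fderiv ℝ F) := hF.fderiv_right (by simp)
  have hf'' : HasFDerivAt (fderiv ℝ F) (fderiv ℝ (fderiv ℝ F) p) p :=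
    ((hf'.differentiable (by simp)) p).hasFDerivAt
  have sym := second_derivative_symmetric hd hf''
  have e1 : HasFDerivAt (fun q => fderiv ℝ F q (1, 0))
      ((fderiv ℝ F p).comp (0 : (ℝ×ℝ) →L[ℝ] (ℝ×ℝ)) +
        (fderiv ℝ (fderiv ℝ F) p).flip ((1:ℝ), (0:ℝ))) p :=
    hf''.clm_apply (hasFDerivAt_const ((1:ℝ),(0:ℝ)) p)
  have e2 : HasFDerivAt (fun q => fderiv ℝ F q (0, 1))
      ((fderiv ℝ F p).comp (0 : (ℝ×ℝ) →L[ℝ] (ℝ×ℝ)) +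
        (fderiv ℝ (fderiv ℝ F) p).flip ((0:ℝ), (1:ℝ))) p :=
    hf''.clm_apply (hasFDerivAt_const ((0:ℝ),(1:ℝ)) p)
  show fderiv ℝ (fun q => fderiv ℝ F q (1, 0)) p (0, 1)
      = fderiv ℝ (fun q => fderiv ℝ F q (0, 1)) p (1, 0)
  rw [e1.fderiv, e2.fderiv]
  simp [sym (0,1) (1,0)]

lemma iteratedDeriv_slice {F : ℝ × ℝ → E} (hF : ContDiff ℝ (⊤ : ℕ∞) F) (k : ℕ) (t w : ℝ) :
    iteratedDeriv k (fun s => F (s, w)) t = pt^[k] F (t, w) := by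
  induction k generalizing F t with
  | zero => simp
  | succ k ih =>
    rw [iteratedDeriv_succ']
    have hder : deriv (fun s => F (s, w)) = fun s => pt F (s, w) :=
      funext fun s => (hasDerivAt_slice_t hF s w).deriv
    rw [hder, ih (contDiff_pt hF) t, Function.iterate_succ_apply]

lemma key_hasDerivAt (t0 tf : ℝ) {f : ℝ × ℝ → E} (hf : ContDiff ℝ (⊤ : ℕ∞) f) (w0 : ℝ) :
    HasDerivAt (fun w => ∫ t in t0..tf, ‖f (t, w)‖ ^ 2)
      (∫ t in t0..tf, 2 * ⟪f (t, w0), pw f (t, w0)⟫) w0 := by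
  have hfc : Continuous f := hf.continuous
  have hpwc : Continuous (pw f) := (contDiff_pw hf).continuous
  -- the inner-product derivative function
  set G : ℝ → ℝ → ℝ := fun w t => 2 * ⟪f (t, w), pw f (t, w)⟫ with hG
  have hGc : Continuous fun p : ℝ × ℝ => 2 * ⟪f (p.1, p.2), pw f (p.1, p.2)⟫ := by
    have : Continuous fun p : ℝ × ℝ => (p.1, p.2) := continuous_fst.prodMk continuous_snd
    exact (continuous_const.mul ((hfc.comp this).inner (hpwc.comp this)))
  -- bound on compact set
  obtain ⟨C, hC⟩ : ∃ C, ∀ p ∈ (uIcc t0 tf ×ˢ Icc (w0 - 1) (w0 + 1)),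
      ‖(2 * ⟪f (p.1, p.2), pw f (p.1, p.2)⟫ : ℝ)‖ ≤ C :=
    (isCompact_uIcc.prod isCompact_Icc).exists_bound_of_continuousOn hGc.continuousOn
  have hdiff : ∀ t : ℝ, ∀ w₁ : ℝ, HasDerivAt (fun w => ‖f (t, w)‖ ^ 2) (G w₁ t) w₁ := by
    intro t w₁
    have h := hasDerivAt_slice_w hf t w₁
    have h2 := (h.inner ℝ h)
    have : (⟪f (t, w₁), pw f (t, w₁)⟫ + ⟪pw f (t, w₁), f (t, w₁)⟫ : ℝ)
        = 2 * ⟪f (t, w₁), pw f (t, w₁)⟫ := by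
      rw [real_inner_comm (pw f (t, w₁))]; ring
    rw [this] at h2
    have heq : (fun w => (⟪f (t, w), f (t, w)⟫ : ℝ)) = fun w => ‖f (t, w)‖ ^ 2 :=
      funext fun w => real_inner_self_eq_norm_sq _
    rw [heq] at h2
    exact h2
  have := (intervalIntegral.hasDerivAt_integral_of_dominated_loc_of_deriv_le
    (F := fun w t => ‖f (t, w)‖ ^ 2) (F' := G) (bound := fun _ => C)
    (μ := volume) (a := t0) (b := tf) (x₀ := w0) (s := Metric.ball w0 1) (Metric.ball_mem_nhds w0 one_pos)
    ?_ ?_ ?_ ?_ ?_ ?_).2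
  · exact this
  · exact Eventually.of_forall fun w =>
      ((hfc.comp (continuous_id.prodMk continuous_const)).norm.pow 2).aestronglyMeasurable
  · exact ((hfc.comp (continuous_id.prodMk continuous_const)).norm.pow 2).intervalIntegrable _ _
  · exact (hGc.comp (continuous_id.prodMk continuous_const)).aestronglyMeasurable
  · refine Eventually.of_forall fun t ht w hw => hC (t, w) ⟨?_, ?_⟩
    · exact uIoc_subset_uIcc ht
    · have : w ∈ Ioo (w0 - 1) (w0 + 1) := by
        rwa [Real.ball_eq_Ioo] at hw
      exact Ioo_subset_Icc_self this
  · exact intervalIntegrable_const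
  · exact Eventually.of_forall fun t ht w hw => hdiff t w

lemma ibp_inner (a b : ℝ) (u v u' v' : ℝ → E)
    (hu : ∀ t, HasDerivAt u (u' t) t) (hv : ∀ t, HasDerivAt v (v' t) t)
    (hu' : Continuous u') (hv' : Continuous v') :
    (∫ t in a..b, (⟪u' t, v t⟫ + ⟪u t, v' t⟫ : ℝ))
      = ⟪u b, v b⟫ - ⟪u a, v a⟫ := by
  have hus : Continuous u := by
    rw [continuous_iff_continuousAt]; exact fun t => (hu t).continuousAt
  have hvs : Continuous v := by
    rw [continuous_iff_continuousAt]; exact fun t => (hv t).continuousAt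
  refine intervalIntegral.integral_eq_sub_of_hasDerivAt (f := fun t => (⟪u t, v t⟫ : ℝ)) (fun t _ => ?_) ?_
  · exact ((hu t).inner ℝ (hv t)).congr_deriv (add_comm _ _)
  · exact (((hu'.inner hvs).add (hus.inner hv'))).intervalIntegrable _ _

theorem stmt_17 (n : ℕ) (t0 tf : ℝ) (ht : t0 < tf)
    (x : ℝ → ℝ → EuclideanSpace ℝ (Fin n))
    (hsmooth : ContDiff ℝ (⊤ : ℕ∞) (fun p : ℝ × ℝ => x p.1 p.2))
    (x0 v0 x1 v1 : EuclideanSpace ℝ (Fin n))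
    (hODE : ∀ w ∈ Ioo (0:ℝ) 1, ∀ t ∈ Icc t0 tf,
      iteratedDeriv 4 (fun s => x s w) t - (w / (1 - w)) • iteratedDeriv 2 (fun s => x s w) t = 0)
    (hbd : ∀ w ∈ Ioo (0:ℝ) 1,
      x t0 w = x0 ∧ deriv (fun s => x s w) t0 = v0 ∧
      x tf w = x1 ∧ deriv (fun s => x s w) tf = v1)
    (F1 F2 : ℝ → ℝ)
    (hF1 : ∀ w : ℝ, F1 w = ∫ t in t0..tf, ‖deriv (fun s => x s w) t‖ ^ 2)
    (hF2 : ∀ w : ℝ, F2 w = ∫ t in t0..tf, ‖iteratedDeriv 2 (fun s => x s w) t‖ ^ 2) :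
    ∀ w ∈ Ioo (0:ℝ) 1,
      deriv F2 w = -(w / (1 - w)) * deriv F1 w ∧
      deriv F1 w = -2 * ∫ t in t0..tf,
        (inner ℝ (iteratedDeriv 2 (fun s => x s w) t) (deriv (fun w' => x t w') w) : ℝ) := by
  intro w hw
  obtain ⟨hw0, hw1⟩ := hw
  have hX : ContDiff ℝ (⊤ : ℕ∞) (fun p : ℝ × ℝ => x p.1 p.2) := hsmooth
  have hX1 : ContDiff ℝ (⊤ : ℕ∞) (pt (fun p : ℝ × ℝ => x p.1 p.2)) := contDiff_pt hX
  have hX2 : ContDiff ℝ (⊤ : ℕ∞) (pt (pt (fun p : ℝ × ℝ => x p.1 p.2))) := contDiff_pt hX1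
  have hX3 : ContDiff ℝ (⊤ : ℕ∞) (pt (pt (pt (fun p : ℝ × ℝ => x p.1 p.2)))) := contDiff_pt hX2
  have hX4 : ContDiff ℝ (⊤ : ℕ∞) (pt (pt (pt (pt (fun p : ℝ × ℝ => x p.1 p.2))))) := contDiff_pt hX3
  have hYc : ContDiff ℝ (⊤ : ℕ∞) (pw (fun p : ℝ × ℝ => x p.1 p.2)) := contDiff_pw hX
  have hY1c : ContDiff ℝ (⊤ : ℕ∞) (pt (pw (fun p : ℝ × ℝ => x p.1 p.2))) := contDiff_pt hYc
  have hY2c : ContDiff ℝ (⊤ : ℕ∞) (pt (pt (pw (fun p : ℝ × ℝ => x p.1 p.2)))) := contDiff_pt hY1c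
  have hswap : pw (pt (fun p : ℝ × ℝ => x p.1 p.2)) = (pt (pw (fun p : ℝ × ℝ => x p.1 p.2))) := funext fun p => pw_pt_eq hX p
  have hswap2 : ∀ p, pw (pt (pt (fun p : ℝ × ℝ => x p.1 p.2))) p = (pt (pt (pw (fun p : ℝ × ℝ => x p.1 p.2)))) p := by
    intro p; rw [pw_pt_eq hX1 p, hswap]
  have hev : ∀ᶠ w' in nhds w, w' ∈ Ioo (0:ℝ) 1 := isOpen_Ioo.mem_nhds ⟨hw0, hw1⟩
  -- slice derivative descriptions
  have h1d : ∀ (t w' : ℝ), deriv (fun s => x s w') t = (pt (fun p : ℝ × ℝ => x p.1 p.2)) (t, w') :=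
    fun t w' => (hasDerivAt_slice_t hX t w').deriv
  have h2d : ∀ (t w' : ℝ), iteratedDeriv 2 (fun s => x s w') t = (pt (pt (fun p : ℝ × ℝ => x p.1 p.2))) (t, w') :=
    fun t w' => iteratedDeriv_slice hX 2 t w'
  have h4d : ∀ (t w' : ℝ), iteratedDeriv 4 (fun s => x s w') t = (pt (pt (pt (pt (fun p : ℝ × ℝ => x p.1 p.2))))) (t, w') :=
    fun t w' => iteratedDeriv_slice hX 4 t w'
  have hwd : ∀ t : ℝ, deriv (fun w' => x t w') w = (pw (fun p : ℝ × ℝ => x p.1 p.2)) (t, w) :=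
    fun t => (hasDerivAt_slice_w hX t w).deriv
  -- boundary vanishing
  have hYt0 : (pw (fun p : ℝ × ℝ => x p.1 p.2)) (t0, w) = 0 := by
    have h := hasDerivAt_slice_w hX t0 w
    have heq : (fun w' => x t0 w') =ᶠ[nhds w] fun _ => x0 :=
      hev.mono fun w' hw' => (hbd w' hw').1
    rw [← h.deriv, heq.deriv_eq, deriv_const]
  have hYtf : (pw (fun p : ℝ × ℝ => x p.1 p.2)) (tf, w) = 0 := by
    have h := hasDerivAt_slice_w hX tf w
    have heq : (fun w' => x tf w') =ᶠ[nhds w] fun _ => x1 :=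
      hev.mono fun w' hw' => (hbd w' hw').2.2.1
    rw [← h.deriv, heq.deriv_eq, deriv_const]
  have hY1t0 : (pt (pw (fun p : ℝ × ℝ => x p.1 p.2))) (t0, w) = 0 := by
    have h := hasDerivAt_slice_w hX1 t0 w
    have heq : (fun w' => (pt (fun p : ℝ × ℝ => x p.1 p.2)) (t0, w')) =ᶠ[nhds w] fun _ => v0 :=
      hev.mono fun w' hw' => by show pt (fun p : ℝ × ℝ => x p.1 p.2) (t0, w') = v0; rw [← h1d t0 w']; exact (hbd w' hw').2.1
    rw [← pw_pt_eq hX (t0, w), ← h.deriv, heq.deriv_eq, deriv_const]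
  have hY1tf : (pt (pw (fun p : ℝ × ℝ => x p.1 p.2))) (tf, w) = 0 := by
    have h := hasDerivAt_slice_w hX1 tf w
    have heq : (fun w' => (pt (fun p : ℝ × ℝ => x p.1 p.2)) (tf, w')) =ᶠ[nhds w] fun _ => v1 :=
      hev.mono fun w' hw' => by show pt (fun p : ℝ × ℝ => x p.1 p.2) (tf, w') = v1; rw [← h1d tf w']; exact (hbd w' hw').2.2.2
    rw [← pw_pt_eq hX (tf, w), ← h.deriv, heq.deriv_eq, deriv_const]
  -- slice HasDerivAt in t
  have du1 : ∀ t : ℝ, HasDerivAt (fun s => (pt (fun p : ℝ × ℝ => x p.1 p.2)) (s, w)) ((pt (pt (fun p : ℝ × ℝ => x p.1 p.2))) (t, w)) t :=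
    fun t => hasDerivAt_slice_t hX1 t w
  have du2 : ∀ t : ℝ, HasDerivAt (fun s => (pt (pt (fun p : ℝ × ℝ => x p.1 p.2))) (s, w)) ((pt (pt (pt (fun p : ℝ × ℝ => x p.1 p.2)))) (t, w)) t :=
    fun t => hasDerivAt_slice_t hX2 t w
  have du3 : ∀ t : ℝ, HasDerivAt (fun s => (pt (pt (pt (fun p : ℝ × ℝ => x p.1 p.2)))) (s, w)) ((pt (pt (pt (pt (fun p : ℝ × ℝ => x p.1 p.2))))) (t, w)) t :=
    fun t => hasDerivAt_slice_t hX3 t w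
  have dv0 : ∀ t : ℝ, HasDerivAt (fun s => (pw (fun p : ℝ × ℝ => x p.1 p.2)) (s, w)) ((pt (pw (fun p : ℝ × ℝ => x p.1 p.2))) (t, w)) t :=
    fun t => hasDerivAt_slice_t hYc t w
  have dv1 : ∀ t : ℝ, HasDerivAt (fun s => (pt (pw (fun p : ℝ × ℝ => x p.1 p.2))) (s, w)) ((pt (pt (pw (fun p : ℝ × ℝ => x p.1 p.2)))) (t, w)) t :=
    fun t => hasDerivAt_slice_t hY1c t w
  -- continuity of slices
  have cs : ∀ {g : ℝ × ℝ → EuclideanSpace ℝ (Fin n)}, Continuous g →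
      Continuous (fun t => g (t, w)) :=
    fun hg => hg.comp (continuous_id.prodMk continuous_const)
  -- integrability
  have i11 : IntervalIntegrable (fun t => (⟪(pt (fun p : ℝ × ℝ => x p.1 p.2)) (t, w), (pt (pw (fun p : ℝ × ℝ => x p.1 p.2))) (t, w)⟫ : ℝ)) MeasureTheory.volume t0 tf :=
    ((cs hX1.continuous).inner (cs hY1c.continuous)).intervalIntegrable _ _
  have i20 : IntervalIntegrable (fun t => (⟪(pt (pt (fun p : ℝ × ℝ => x p.1 p.2))) (t, w), (pw (fun p : ℝ × ℝ => x p.1 p.2)) (t, w)⟫ : ℝ)) MeasureTheory.volume t0 tf :=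
    ((cs hX2.continuous).inner (cs hYc.continuous)).intervalIntegrable _ _
  have i22 : IntervalIntegrable (fun t => (⟪(pt (pt (fun p : ℝ × ℝ => x p.1 p.2))) (t, w), (pt (pt (pw (fun p : ℝ × ℝ => x p.1 p.2)))) (t, w)⟫ : ℝ)) MeasureTheory.volume t0 tf :=
    ((cs hX2.continuous).inner (cs hY2c.continuous)).intervalIntegrable _ _
  have i31 : IntervalIntegrable (fun t => (⟪(pt (pt (pt (fun p : ℝ × ℝ => x p.1 p.2)))) (t, w), (pt (pw (fun p : ℝ × ℝ => x p.1 p.2))) (t, w)⟫ : ℝ)) MeasureTheory.volume t0 tf :=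
    ((cs hX3.continuous).inner (cs hY1c.continuous)).intervalIntegrable _ _
  have i40 : IntervalIntegrable (fun t => (⟪(pt (pt (pt (pt (fun p : ℝ × ℝ => x p.1 p.2))))) (t, w), (pw (fun p : ℝ × ℝ => x p.1 p.2)) (t, w)⟫ : ℝ)) MeasureTheory.volume t0 tf :=
    ((cs hX4.continuous).inner (cs hYc.continuous)).intervalIntegrable _ _
  -- integration by parts, three times
  have ibp3 := ibp_inner t0 tf (fun t => (pt (fun p : ℝ × ℝ => x p.1 p.2)) (t, w)) (fun t => (pw (fun p : ℝ × ℝ => x p.1 p.2)) (t, w))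
    (fun t => (pt (pt (fun p : ℝ × ℝ => x p.1 p.2))) (t, w)) (fun t => (pt (pw (fun p : ℝ × ℝ => x p.1 p.2))) (t, w)) du1 dv0
    (cs hX2.continuous) (cs hY1c.continuous)
  beta_reduce at ibp3
  rw [hYt0, hYtf, inner_zero_right, inner_zero_right, sub_zero,
    intervalIntegral.integral_add i20 i11] at ibp3
  have ibp1 := ibp_inner t0 tf (fun t => (pt (pt (fun p : ℝ × ℝ => x p.1 p.2))) (t, w)) (fun t => (pt (pw (fun p : ℝ × ℝ => x p.1 p.2))) (t, w))
    (fun t => (pt (pt (pt (fun p : ℝ × ℝ => x p.1 p.2)))) (t, w)) (fun t => (pt (pt (pw (fun p : ℝ × ℝ => x p.1 p.2)))) (t, w)) du2 dv1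
    (cs hX3.continuous) (cs hY2c.continuous)
  beta_reduce at ibp1
  rw [hY1t0, hY1tf, inner_zero_right, inner_zero_right, sub_zero,
    intervalIntegral.integral_add i31 i22] at ibp1
  have ibp2 := ibp_inner t0 tf (fun t => (pt (pt (pt (fun p : ℝ × ℝ => x p.1 p.2)))) (t, w)) (fun t => (pw (fun p : ℝ × ℝ => x p.1 p.2)) (t, w))
    (fun t => (pt (pt (pt (pt (fun p : ℝ × ℝ => x p.1 p.2))))) (t, w)) (fun t => (pt (pw (fun p : ℝ × ℝ => x p.1 p.2))) (t, w)) du3 dv0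
    (cs hX4.continuous) (cs hY1c.continuous)
  beta_reduce at ibp2
  rw [hYt0, hYtf, inner_zero_right, inner_zero_right, sub_zero,
    intervalIntegral.integral_add i40 i31] at ibp2
  -- the ODE
  have hODEw : ∀ t ∈ Icc t0 tf, (pt (pt (pt (pt (fun p : ℝ × ℝ => x p.1 p.2))))) (t, w) = (w / (1 - w)) • (pt (pt (fun p : ℝ × ℝ => x p.1 p.2))) (t, w) := by
    intro t htI
    have h := hODE w ⟨hw0, hw1⟩ t htI
    rw [h4d t w, h2d t w] at h
    exact sub_eq_zero.mp h
  have hA2 : (∫ t in t0..tf, (⟪(pt (pt (pt (pt (fun p : ℝ × ℝ => x p.1 p.2))))) (t, w), (pw (fun p : ℝ × ℝ => x p.1 p.2)) (t, w)⟫ : ℝ))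
      = (w / (1 - w)) * ∫ t in t0..tf, (⟪(pt (pt (fun p : ℝ × ℝ => x p.1 p.2))) (t, w), (pw (fun p : ℝ × ℝ => x p.1 p.2)) (t, w)⟫ : ℝ) := by
    rw [← intervalIntegral.integral_const_mul]
    refine intervalIntegral.integral_congr fun t htI => ?_
    rw [hODEw t (by rwa [uIcc_of_le ht.le] at htI), real_inner_smul_left]
  -- derivative of F1
  have hF1' : deriv F1 w = 2 * ∫ t in t0..tf, (⟪(pt (fun p : ℝ × ℝ => x p.1 p.2)) (t, w), (pt (pw (fun p : ℝ × ℝ => x p.1 p.2))) (t, w)⟫ : ℝ) := by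
    have hfun : F1 = fun w' => ∫ t in t0..tf, ‖(pt (fun p : ℝ × ℝ => x p.1 p.2)) (t, w')‖ ^ 2 := by
      funext w'
      rw [hF1 w']
      exact intervalIntegral.integral_congr fun t _ => by rw [h1d t w']
    have hkey := (key_hasDerivAt t0 tf hX1 w).deriv
    have e : (∫ t in t0..tf, (2 * ⟪(pt (fun p : ℝ × ℝ => x p.1 p.2)) (t, w), pw (pt (fun p : ℝ × ℝ => x p.1 p.2)) (t, w)⟫ : ℝ))
        = ∫ t in t0..tf, (2 * ⟪(pt (fun p : ℝ × ℝ => x p.1 p.2)) (t, w), (pt (pw (fun p : ℝ × ℝ => x p.1 p.2))) (t, w)⟫ : ℝ) :=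
      intervalIntegral.integral_congr fun t _ => by rw [pw_pt_eq hX (t, w)]
    rw [hfun, hkey, e, intervalIntegral.integral_const_mul]
  -- derivative of F2
  have hF2' : deriv F2 w = 2 * ∫ t in t0..tf, (⟪(pt (pt (fun p : ℝ × ℝ => x p.1 p.2))) (t, w), (pt (pt (pw (fun p : ℝ × ℝ => x p.1 p.2)))) (t, w)⟫ : ℝ) := by
    have hfun : F2 = fun w' => ∫ t in t0..tf, ‖(pt (pt (fun p : ℝ × ℝ => x p.1 p.2))) (t, w')‖ ^ 2 := by
      funext w'
      rw [hF2 w']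
      exact intervalIntegral.integral_congr fun t _ => by rw [h2d t w']
    have hkey := (key_hasDerivAt t0 tf hX2 w).deriv
    have e : (∫ t in t0..tf, (2 * ⟪(pt (pt (fun p : ℝ × ℝ => x p.1 p.2))) (t, w), pw (pt (pt (fun p : ℝ × ℝ => x p.1 p.2))) (t, w)⟫ : ℝ))
        = ∫ t in t0..tf, (2 * ⟪(pt (pt (fun p : ℝ × ℝ => x p.1 p.2))) (t, w), (pt (pt (pw (fun p : ℝ × ℝ => x p.1 p.2)))) (t, w)⟫ : ℝ) :=
      intervalIntegral.integral_congr fun t _ => by rw [hswap2 (t, w)]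
    rw [hfun, hkey, e, intervalIntegral.integral_const_mul]
  constructor
  · rw [hF1', hF2']
    rw [hA2] at ibp2
    linear_combination 2 * ibp1 - 2 * ibp2 + 2 * (w / (1 - w)) * ibp3
  · have e : (∫ t in t0..tf,
        (inner ℝ (iteratedDeriv 2 (fun s => x s w) t) (deriv (fun w' => x t w') w) : ℝ))
        = ∫ t in t0..tf, (⟪(pt (pt (fun p : ℝ × ℝ => x p.1 p.2))) (t, w), (pw (fun p : ℝ × ℝ => x p.1 p.2)) (t, w)⟫ : ℝ) :=
      intervalIntegral.integral_congr fun t _ => by rw [h2d t w, hwd t]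
    rw [hF1', e]
    linear_combination 2 * ibp3
end

section
/- Consider the energy functional E(x) = ∫_{t₀}^{t_f} ‖ẋ(t)‖² dt on smooth curves x : [t₀,t_f] → ℝⁿ with fixed endpoints x(t₀) = x₀, x(t_f) = x₁ and fixed end-velocities ẋ(t₀) = v₀, ẋ(t_f) = v₁. If v₀ ≠ (x₁ − x₀)/(t_f − t₀) or v₁ ≠ (x₁ − x₀)/(t_f − t₀), then the infimum ‖x₁ − x₀‖²/(t_f − t₀) of E over this class is not attained, although it is attained over the larger class with free end-velocities (by the straight-line constant-speed curve). -/
open Set intervalIntegral MeasureTheory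
open scoped RealInnerProductSpace

set_option maxHeartbeats 1000000

-- zero lemma
lemma aux_zero {g : ℝ → ℝ} (hg : Continuous g) (hg0 : ∀ t, 0 ≤ g t) {a b : ℝ} (hab : a < b)
    (hint : (∫ t in a..b, g t) = 0) : ∀ t ∈ Icc a b, g t = 0 := by
  intro t htm
  by_contra hne
  have hpos : 0 < g t := lt_of_le_of_ne (hg0 t) (Ne.symm hne)
  have hev : ∀ᶠ u in nhds t, 0 < g u := (hg.continuousAt).eventually (eventually_gt_nhds hpos)
  obtain ⟨ε, hε, hball⟩ := Metric.eventually_nhds_iff.mp hev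
  set u := max a (t - ε/2)
  set v := min b (t + ε/2)
  have huv : u < v := by
    apply max_lt <;> apply lt_min
    · exact hab
    · linarith [htm.1, hε]
    · linarith [htm.2, hε]
    · linarith
  have hposuv : ∀ w ∈ Ioo u v, 0 < g w := by
    intro w hw
    apply hball
    rw [Real.dist_eq, abs_lt]
    constructor
    · have : t - ε/2 ≤ u := le_max_right _ _
      linarith [hw.1]
    · have : v ≤ t + ε/2 := min_le_right _ _
      linarith [hw.2]
  have hiuv : (0:ℝ) < ∫ w in u..v, g w :=
    intervalIntegral_pos_of_pos_on ((hg.intervalIntegrable _ _)) hposuv huv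
  have h1 : (0:ℝ) ≤ ∫ w in a..u, g w :=
    intervalIntegral.integral_nonneg (le_max_left _ _) (fun w _ => hg0 w)
  have h2 : (0:ℝ) ≤ ∫ w in v..b, g w :=
    intervalIntegral.integral_nonneg (min_le_left _ _) (fun w _ => hg0 w)
  have hsplit : (∫ w in a..u, g w) + (∫ w in u..v, g w) + (∫ w in v..b, g w)
      = ∫ w in a..b, g w := by
    rw [integral_add_adjacent_intervals (hg.intervalIntegrable _ _) (hg.intervalIntegrable _ _),
      integral_add_adjacent_intervals (hg.intervalIntegrable _ _) (hg.intervalIntegrable _ _)]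
  rw [hint] at hsplit
  linarith

-- decomposition
lemma aux_decomp {F : Type*} [NormedAddCommGroup F] [InnerProductSpace ℝ F] [CompleteSpace F]
    (a b : ℝ) (x : ℝ → F) (hx : ContDiff ℝ (⊤ : ℕ∞) x) (c : F) :
    (∫ t in a..b, ‖deriv x t‖ ^ 2) =
      (∫ t in a..b, ‖deriv x t - c‖ ^ 2) + (2 * ⟪c, x b - x a⟫ - (b - a) * ‖c‖ ^ 2) := by
  have hd : Continuous (deriv x) := hx.continuous_deriv (by simp)
  have i1 : IntervalIntegrable (fun t => ‖deriv x t - c‖ ^ 2) MeasureTheory.volume a b :=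
    (((hd.sub continuous_const).norm.pow 2)).intervalIntegrable _ _
  have i2 : IntervalIntegrable (fun t => 2 * ⟪c, deriv x t⟫ - ‖c‖ ^ 2)
      MeasureTheory.volume a b := by
    have : Continuous (fun t => 2 * ⟪c, deriv x t⟫ - ‖c‖ ^ 2) :=
      (continuous_const.mul (continuous_const.inner hd)).sub continuous_const
    exact this.intervalIntegrable _ _
  have key : (∫ t in a..b, deriv x t) = x b - x a :=
    integral_deriv_eq_sub (fun t _ => (hx.differentiable (by simp)).differentiableAt)
      (hd.intervalIntegrable _ _)
  have hinner : (∫ t in a..b, ⟪c, deriv x t⟫) = ⟪c, x b - x a⟫ := by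
    have := (innerSL ℝ c).intervalIntegral_comp_comm (μ := MeasureTheory.volume) (hd.intervalIntegrable a b)
    simpa [key] using this
  have hpt : ∀ t, ‖deriv x t‖ ^ 2 =
      ‖deriv x t - c‖ ^ 2 + (2 * ⟪c, deriv x t⟫ - ‖c‖ ^ 2) := by
    intro t
    have := norm_sub_sq_real (deriv x t) c
    have h2 := real_inner_comm (deriv x t) c
    linarith
  calc (∫ t in a..b, ‖deriv x t‖ ^ 2)
      = ∫ t in a..b, (‖deriv x t - c‖ ^ 2 + (2 * ⟪c, deriv x t⟫ - ‖c‖ ^ 2)) := by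
        apply intervalIntegral.integral_congr; intro t _; exact hpt t
    _ = (∫ t in a..b, ‖deriv x t - c‖ ^ 2) + ∫ t in a..b, (2 * ⟪c, deriv x t⟫ - ‖c‖ ^ 2) :=
        integral_add i1 i2
    _ = (∫ t in a..b, ‖deriv x t - c‖ ^ 2) + (2 * ⟪c, x b - x a⟫ - (b - a) * ‖c‖ ^ 2) := by
        congr 1
        rw [integral_sub _ (intervalIntegrable_const), intervalIntegral.integral_const_mul, hinner,
          intervalIntegral.integral_const]
        · simp [smul_eq_mul]
        · exact (continuous_const.mul (continuous_const.inner hd)).intervalIntegrable _ _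

lemma aux_scalar (t0 tf : ℝ) (ht : t0 < tf) (j : ℕ) (hj : 1 ≤ j) :
    ∃ f : ℝ → ℝ, ContDiff ℝ (⊤ : ℕ∞) f ∧ f t0 = 0 ∧ f tf = 0 ∧
    ∃ D : ℝ → ℝ, Continuous D ∧ (∀ t, HasDerivAt f (D t) t) ∧ D t0 = 1 ∧ D tf = 0 ∧
    (∫ t in t0..tf, (D t)^2) ≤ (tf - t0)/j := by
  have hT : (0:ℝ) < tf - t0 := sub_pos.2 ht
  have hTne : tf - t0 ≠ 0 := ne_of_gt hT
  set w : ℝ → ℝ := fun t => (tf - t)/(tf - t0) with hw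
  have hwc : Continuous w := (continuous_const.sub continuous_id).div_const _
  have hjne : j ≠ 0 := by omega
  refine ⟨fun t => (t - t0) * w t ^ (j+1), ?_, by simp, ?_,
    fun t => w t ^ (j+1) - ((j:ℝ)+1) * (1 - w t) * w t ^ j, ?_, ?_, ?_, ?_, ?_⟩
  · apply ContDiff.mul
    · exact contDiff_id.sub contDiff_const
    · exact ((contDiff_const.sub contDiff_id).div_const _).pow _
  · have : w tf = 0 := by simp [hw]
    simp [this, hjne]
  · fun_prop
  · intro t
    have hwd : HasDerivAt w ((-1)/(tf - t0)) t :=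
      ((hasDerivAt_id t).const_sub tf).div_const _
    have hpow := hwd.pow (j+1)
    have hf := ((hasDerivAt_id t).sub_const t0).mul hpow
    have hf' : HasDerivAt (fun t => (t - t0) * w t ^ (j+1))
        (1 * w t ^ (j+1) + (id t - t0) * (((j+1 : ℕ) : ℝ) * w t ^ (j + 1 - 1) * (-1 / (tf - t0)))) t := hf
    convert hf' using 1
    have h1 : t - t0 = (tf - t0) * (1 - w t) := by
      simp only [hw]
      field_simp
      ring
    simp only [id_eq, Nat.add_sub_cancel]
    rw [h1]
    push_cast
    field_simp
    ring
  · have : w t0 = 1 := by simp [hw, div_self hTne]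
    simp [this]
  · have : w tf = 0 := by simp [hw]
    simp [this, hjne, zero_pow]
  · -- the integral bound
    have key : ∀ m : ℕ, (∫ t in t0..tf, w t ^ m) = (tf - t0)/((m:ℝ)+1) := by
      intro m
      have h1 : (∫ t in t0..tf, w t ^ m) = (∫ t in t0..tf, (tf - t)^m) / (tf - t0)^m := by
        rw [← intervalIntegral.integral_div]
        apply intervalIntegral.integral_congr
        intro t _
        simp [hw, div_pow]
      have h2 : (∫ t in t0..tf, (tf - t)^m) = ∫ x in (tf - tf)..(tf - t0), x^m :=
        intervalIntegral.integral_comp_sub_left (fun x => x^m) tf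
      have h3 : (∫ x in (tf - tf)..(tf - t0), x^m) = (tf - t0)^(m+1)/((m:ℝ)+1) := by
        rw [sub_self, integral_pow]
        simp
      rw [h1, h2, h3, pow_succ]
      have hm : ((m:ℝ)+1) ≠ 0 := by positivity
      field_simp
    have hDsq : ∀ t, (w t ^ (j+1) - ((j:ℝ)+1) * (1 - w t) * w t ^ j)^2 =
        ((j:ℝ)+2)^2 * w t^(2*j+2) - 2*((j:ℝ)+1)*((j:ℝ)+2) * w t^(2*j+1)
          + ((j:ℝ)+1)^2 * w t^(2*j) := by
      intro t
      ring
    have i1 : IntervalIntegrable (fun t => ((j:ℝ)+2)^2 * w t^(2*j+2)) volume t0 tf := by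
      apply Continuous.intervalIntegrable; fun_prop
    have i2 : IntervalIntegrable (fun t => 2*((j:ℝ)+1)*((j:ℝ)+2) * w t^(2*j+1)) volume t0 tf := by
      apply Continuous.intervalIntegrable; fun_prop
    have i3 : IntervalIntegrable (fun t => ((j:ℝ)+1)^2 * w t^(2*j)) volume t0 tf := by
      apply Continuous.intervalIntegrable; fun_prop
    have hInt : (∫ t in t0..tf, (w t ^ (j+1) - ((j:ℝ)+1) * (1 - w t) * w t ^ j)^2)
        = ((j:ℝ)+2)^2 * ((tf - t0)/(((2*j+2:ℕ):ℝ)+1))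
          - 2*((j:ℝ)+1)*((j:ℝ)+2) * ((tf - t0)/(((2*j+1:ℕ):ℝ)+1))
          + ((j:ℝ)+1)^2 * ((tf - t0)/(((2*j:ℕ):ℝ)+1)) := by
      rw [intervalIntegral.integral_congr (g := fun t =>
        ((j:ℝ)+2)^2 * w t^(2*j+2) - 2*((j:ℝ)+1)*((j:ℝ)+2) * w t^(2*j+1)
          + ((j:ℝ)+1)^2 * w t^(2*j)) (fun t _ => hDsq t)]
      rw [intervalIntegral.integral_add (i1.sub i2) i3, intervalIntegral.integral_sub i1 i2,
        intervalIntegral.integral_const_mul, intervalIntegral.integral_const_mul,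
        intervalIntegral.integral_const_mul, key, key, key]
    rw [hInt]
    set J : ℝ := (j:ℝ) with hJdef
    have hJ : 1 ≤ J := Nat.one_le_cast.mpr hj
    push_cast
    have e1 : (2*J+3) ≠ 0 := by positivity
    have e2 : (2*J+2) ≠ 0 := by positivity
    have e3 : (2*J+1) ≠ 0 := by positivity
    have hA : (J+2)^2 * ((tf - t0)/(2*J+2+1)) - 2*(J+1)*(J+2) * ((tf - t0)/(2*J+1+1))
        + (J+1)^2 * ((tf - t0)/(2*J+1))
        = (tf - t0)*(J+1)/((2*J+1)*(2*J+3)) := by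
      field_simp
      ring
    rw [hA, div_le_div_iff₀ (by positivity) (by positivity)]
    nlinarith [hT, hJ]

lemma aux_scalar2 (t0 tf : ℝ) (ht : t0 < tf) (j : ℕ) (hj : 1 ≤ j) :
    ∃ g : ℝ → ℝ, ContDiff ℝ (⊤ : ℕ∞) g ∧ g t0 = 0 ∧ g tf = 0 ∧
    ∃ D : ℝ → ℝ, Continuous D ∧ (∀ t, HasDerivAt g (D t) t) ∧ D t0 = 0 ∧ D tf = 1 ∧
    (∫ t in t0..tf, (D t)^2) ≤ (tf - t0)/j := by
  obtain ⟨f, hf, hf0, hf1, D, hDc, hDd, hD0, hD1, hDi⟩ := aux_scalar t0 tf ht j hj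
  refine ⟨fun t => -(f (t0 + tf - t)), ?_, by simpa using hf1, by simpa using hf0,
    fun t => D (t0 + tf - t), hDc.comp (continuous_const.sub continuous_id), ?_,
    by simpa using hD1, by simpa using hD0, ?_⟩
  · exact (hf.comp (contDiff_const.sub contDiff_id)).neg
  · intro t
    have h1 : HasDerivAt (fun t : ℝ => t0 + tf - t) (-1) t :=
      (hasDerivAt_id t).const_sub (t0 + tf)
    have h2 := ((hDd (t0 + tf - t)).comp t h1).neg
    have h3 : HasDerivAt (fun t => -(f (t0 + tf - t))) (-(D (t0 + tf - t) * -1)) t := h2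
    simpa using h3
  · have : (∫ t in t0..tf, (D (t0 + tf - t))^2)
        = ∫ x in (t0 + tf - tf)..(t0 + tf - t0), (D x)^2 :=
      intervalIntegral.integral_comp_sub_left (fun x => (D x)^2) (t0 + tf)
    rw [this]
    have e1 : t0 + tf - tf = t0 := by ring
    have e2 : t0 + tf - t0 = tf := by ring
    rw [e1, e2]
    exact hDi


lemma aux_energy {F : Type*} [NormedAddCommGroup F] [InnerProductSpace ℝ F] [CompleteSpace F]
    (a b : ℝ) (hab : a < b) (x : ℝ → F) (hx : ContDiff ℝ (⊤ : ℕ∞) x) (x0 x1 : F)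
    (h0 : x a = x0) (h1 : x b = x1) :
    (∫ t in a..b, ‖deriv x t‖ ^ 2) =
      (∫ t in a..b, ‖deriv x t - (b - a)⁻¹ • (x1 - x0)‖ ^ 2) + ‖x1 - x0‖ ^ 2 / (b - a) := by
  rw [aux_decomp a b x hx ((b - a)⁻¹ • (x1 - x0)), h0, h1]
  congr 1
  have hba : b - a ≠ 0 := sub_ne_zero.2 (ne_of_gt hab)
  rw [real_inner_smul_left, real_inner_self_eq_norm_sq, norm_smul, mul_pow,
    Real.norm_eq_abs, sq_abs]
  field_simp
  ring

lemma aux_curve (n : ℕ) (t0 tf : ℝ) (ht : t0 < tf)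
    (x0 x1 v0 v1 : EuclideanSpace ℝ (Fin n)) (j : ℕ) (hj : 1 ≤ j) :
    ∃ X : ℝ → EuclideanSpace ℝ (Fin n), ContDiff ℝ (⊤ : ℕ∞) X ∧ X t0 = x0 ∧ X tf = x1 ∧
      deriv X t0 = v0 ∧ deriv X tf = v1 ∧
      (∫ t in t0..tf, ‖deriv X t‖^2) ≤ ‖x1 - x0‖^2/(tf - t0)
        + 2*(‖v0 - (tf - t0)⁻¹ • (x1 - x0)‖^2 + ‖v1 - (tf - t0)⁻¹ • (x1 - x0)‖^2)
          * ((tf - t0)/j) := by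
  have hT : (0:ℝ) < tf - t0 := sub_pos.2 ht
  have hTne : tf - t0 ≠ 0 := ne_of_gt hT
  set c : EuclideanSpace ℝ (Fin n) := (tf - t0)⁻¹ • (x1 - x0) with hc
  set va : EuclideanSpace ℝ (Fin n) := v0 - c with hva
  set vb : EuclideanSpace ℝ (Fin n) := v1 - c with hvb
  obtain ⟨f, hfC, hf0, hf1, Df, hDfc, hDfd, hDf0, hDf1, hfi⟩ := aux_scalar t0 tf ht j hj
  obtain ⟨g, hgC, hg0, hg1, Dg, hDgc, hDgd, hDg0, hDg1, hgi⟩ := aux_scalar2 t0 tf ht j hj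
  set X : ℝ → EuclideanSpace ℝ (Fin n) :=
    fun t => x0 + (t - t0) • c + f t • va + g t • vb with hX
  have hXC : ContDiff ℝ (⊤ : ℕ∞) X := by
    apply ContDiff.add
    apply ContDiff.add
    apply ContDiff.add
    · exact contDiff_const
    · exact (contDiff_id.sub contDiff_const).smul contDiff_const
    · exact hfC.smul contDiff_const
    · exact hgC.smul contDiff_const
  have HX : ∀ t, HasDerivAt X (c + Df t • va + Dg t • vb) t := by
    intro t
    have h1 := ((hasDerivAt_id t).sub_const t0).smul_const c
    have h2 := (hDfd t).smul_const va
    have h3 := (hDgd t).smul_const vb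
    have h4 := (((hasDerivAt_const t x0).add h1).add h2).add h3
    have h4' : HasDerivAt X (0 + (1:ℝ) • c + Df t • va + Dg t • vb) t := h4
    convert h4' using 1
    module
  have hderiv : ∀ t, deriv X t = c + Df t • va + Dg t • vb := fun t => (HX t).deriv
  have hX0 : X t0 = x0 := by
    simp [hX, hf0, hg0]
  have hX1 : X tf = x1 := by
    simp only [hX, hf1, hg1, zero_smul, add_zero]
    rw [hc, smul_smul, mul_inv_cancel₀ hTne, one_smul]
    abel
  have hd0 : deriv X t0 = v0 := by
    rw [hderiv t0, hDf0, hDg0, hva]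
    module
  have hd1 : deriv X tf = v1 := by
    rw [hderiv tf, hDf1, hDg1, hvb]
    module
  refine ⟨X, hXC, hX0, hX1, hd0, hd1, ?_⟩
  rw [aux_energy t0 tf ht X hXC x0 x1 hX0 hX1]
  have hmain : (∫ t in t0..tf, ‖deriv X t - c‖^2)
      ≤ 2*(‖va‖^2 + ‖vb‖^2) * ((tf - t0)/j) := by
    have step1 : (∫ t in t0..tf, ‖deriv X t - c‖^2)
        = ∫ t in t0..tf, ‖Df t • va + Dg t • vb‖^2 := by
      apply intervalIntegral.integral_congr
      intro t _
      show ‖deriv X t - c‖^2 = ‖Df t • va + Dg t • vb‖^2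
      rw [hderiv t]
      congr 1
      abel_nf
    rw [step1]
    have cont1 : Continuous fun t => ‖Df t • va + Dg t • vb‖^2 := by fun_prop
    have cont2 : Continuous fun t => 2*‖va‖^2*(Df t)^2 + 2*‖vb‖^2*(Dg t)^2 := by fun_prop
    have step2 : (∫ t in t0..tf, ‖Df t • va + Dg t • vb‖^2)
        ≤ ∫ t in t0..tf, (2*‖va‖^2*(Df t)^2 + 2*‖vb‖^2*(Dg t)^2) := by
      apply intervalIntegral.integral_mono_on ht.le
        (cont1.intervalIntegrable _ _) (cont2.intervalIntegrable _ _)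
      intro t _
      have h1 : ‖Df t • va + Dg t • vb‖ ≤ |Df t| * ‖va‖ + |Dg t| * ‖vb‖ := by
        refine (norm_add_le _ _).trans (le_of_eq ?_)
        rw [norm_smul, norm_smul, Real.norm_eq_abs, Real.norm_eq_abs]
      have h2 : ‖Df t • va + Dg t • vb‖^2 ≤ (|Df t| * ‖va‖ + |Dg t| * ‖vb‖)^2 :=
        pow_le_pow_left₀ (norm_nonneg _) h1 2
      have h3 : (|Df t| * ‖va‖ + |Dg t| * ‖vb‖)^2
          ≤ 2*(|Df t| * ‖va‖)^2 + 2*(|Dg t| * ‖vb‖)^2 := by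
        nlinarith [sq_nonneg (|Df t| * ‖va‖ - |Dg t| * ‖vb‖)]
      have h4 : (|Df t| * ‖va‖)^2 = ‖va‖^2 * (Df t)^2 := by rw [mul_pow, sq_abs]; ring
      have h5 : (|Dg t| * ‖vb‖)^2 = ‖vb‖^2 * (Dg t)^2 := by rw [mul_pow, sq_abs]; ring
      rw [h4, h5] at h3
      calc ‖Df t • va + Dg t • vb‖^2 ≤ (|Df t| * ‖va‖ + |Dg t| * ‖vb‖)^2 := h2
        _ ≤ 2*(‖va‖^2 * (Df t)^2) + 2*(‖vb‖^2 * (Dg t)^2) := h3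
        _ = 2*‖va‖^2*(Df t)^2 + 2*‖vb‖^2*(Dg t)^2 := by ring
    refine step2.trans ?_
    have i1 : IntervalIntegrable (fun t => 2*‖va‖^2*(Df t)^2) volume t0 tf := by
      apply Continuous.intervalIntegrable; fun_prop
    have i2 : IntervalIntegrable (fun t => 2*‖vb‖^2*(Dg t)^2) volume t0 tf := by
      apply Continuous.intervalIntegrable; fun_prop
    rw [intervalIntegral.integral_add i1 i2, intervalIntegral.integral_const_mul,
      intervalIntegral.integral_const_mul]
    have b1 : 2*‖va‖^2 * (∫ t in t0..tf, (Df t)^2) ≤ 2*‖va‖^2 * ((tf - t0)/j) := by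
      apply mul_le_mul_of_nonneg_left hfi (by positivity)
    have b2 : 2*‖vb‖^2 * (∫ t in t0..tf, (Dg t)^2) ≤ 2*‖vb‖^2 * ((tf - t0)/j) := by
      apply mul_le_mul_of_nonneg_left hgi (by positivity)
    have hexp : 2*(‖va‖^2 + ‖vb‖^2)*((tf - t0)/(j:ℝ))
        = 2*‖va‖^2*((tf - t0)/(j:ℝ)) + 2*‖vb‖^2*((tf - t0)/(j:ℝ)) := by ring
    rw [hexp]
    linarith [b1, b2]
  linarith [hmain]

theorem stmt_19 (n : ℕ) (t0 tf : ℝ) (ht : t0 < tf)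
    (x0 x1 v0 v1 : EuclideanSpace ℝ (Fin n))
    (hv : v0 ≠ (tf - t0)⁻¹ • (x1 - x0) ∨ v1 ≠ (tf - t0)⁻¹ • (x1 - x0))
    (E : (ℝ → EuclideanSpace ℝ (Fin n)) → ℝ)
    (hE : ∀ x : ℝ → EuclideanSpace ℝ (Fin n), E x = ∫ t in t0..tf, ‖deriv x t‖ ^ 2) :
    (sInf {e : ℝ | ∃ x : ℝ → EuclideanSpace ℝ (Fin n), ContDiff ℝ (⊤ : ℕ∞) x ∧
        x t0 = x0 ∧ x tf = x1 ∧ deriv x t0 = v0 ∧ deriv x tf = v1 ∧ E x = e} =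
      ‖x1 - x0‖ ^ 2 / (tf - t0)) ∧
    (¬ ∃ x : ℝ → EuclideanSpace ℝ (Fin n), ContDiff ℝ (⊤ : ℕ∞) x ∧
        x t0 = x0 ∧ x tf = x1 ∧ deriv x t0 = v0 ∧ deriv x tf = v1 ∧
        E x = ‖x1 - x0‖ ^ 2 / (tf - t0)) ∧
    (∃ y : ℝ → EuclideanSpace ℝ (Fin n), ContDiff ℝ (⊤ : ℕ∞) y ∧
        y t0 = x0 ∧ y tf = x1 ∧ E y = ‖x1 - x0‖ ^ 2 / (tf - t0) ∧
        ∀ z : ℝ → EuclideanSpace ℝ (Fin n), ContDiff ℝ (⊤ : ℕ∞) z →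
          z t0 = x0 → z tf = x1 → ‖x1 - x0‖ ^ 2 / (tf - t0) ≤ E z) := by
  have hT : (0:ℝ) < tf - t0 := sub_pos.2 ht
  have hTne : tf - t0 ≠ 0 := ne_of_gt hT
  -- lower bound for every admissible curve
  have hlow : ∀ z : ℝ → EuclideanSpace ℝ (Fin n), ContDiff ℝ (⊤ : ℕ∞) z → z t0 = x0 → z tf = x1 →
      ‖x1 - x0‖ ^ 2 / (tf - t0) ≤ E z := by
    intro z hz h0 h1
    rw [hE z, aux_energy t0 tf ht z hz x0 x1 h0 h1]
    have h2 : (0:ℝ) ≤ ∫ t in t0..tf, ‖deriv z t - (tf - t0)⁻¹ • (x1 - x0)‖ ^ 2 :=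
      intervalIntegral.integral_nonneg ht.le (fun t _ => by positivity)
    linarith
  -- the straight line
  have hyC : ContDiff ℝ (⊤ : ℕ∞) (fun t : ℝ => x0 + (t - t0) • ((tf - t0)⁻¹ • (x1 - x0))) :=
    contDiff_const.add ((contDiff_id.sub contDiff_const).smul contDiff_const)
  have hyd : ∀ t : ℝ, deriv (fun t : ℝ => x0 + (t - t0) • ((tf - t0)⁻¹ • (x1 - x0))) t
      = (tf - t0)⁻¹ • (x1 - x0) := by
    intro t
    have h := (((hasDerivAt_id t).sub_const t0).smul_const
      ((tf - t0)⁻¹ • (x1 - x0))).const_add x0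
    simpa using h.deriv
  have hy0 : (fun t : ℝ => x0 + (t - t0) • ((tf - t0)⁻¹ • (x1 - x0))) t0 = x0 := by simp
  have hy1 : (fun t : ℝ => x0 + (t - t0) • ((tf - t0)⁻¹ • (x1 - x0))) tf = x1 := by
    simp only
    rw [smul_smul, mul_inv_cancel₀ hTne, one_smul]
    abel
  have hyE : E (fun t : ℝ => x0 + (t - t0) • ((tf - t0)⁻¹ • (x1 - x0)))
      = ‖x1 - x0‖ ^ 2 / (tf - t0) := by
    rw [hE _, aux_energy t0 tf ht _ hyC x0 x1 hy0 hy1]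
    have hz : (∫ t in t0..tf,
        ‖deriv (fun t : ℝ => x0 + (t - t0) • ((tf - t0)⁻¹ • (x1 - x0))) t
          - (tf - t0)⁻¹ • (x1 - x0)‖ ^ 2) = 0 := by
      rw [intervalIntegral.integral_congr (g := fun _ => (0:ℝ))]
      · simp
      · intro t _
        show ‖_ - _‖ ^ 2 = 0
        rw [hyd t]
        simp
    rw [hz, zero_add]
  -- approximation
  have hmem : ∀ ε > 0, ∃ e : ℝ, (∃ x : ℝ → EuclideanSpace ℝ (Fin n), ContDiff ℝ (⊤ : ℕ∞) x ∧
      x t0 = x0 ∧ x tf = x1 ∧ deriv x t0 = v0 ∧ deriv x tf = v1 ∧ E x = e) ∧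
      e ≤ ‖x1 - x0‖ ^ 2 / (tf - t0) + ε := by
    intro ε hε
    set K : ℝ := 2*(‖v0 - (tf - t0)⁻¹ • (x1 - x0)‖^2 + ‖v1 - (tf - t0)⁻¹ • (x1 - x0)‖^2)
      * (tf - t0) with hK
    have hK0 : 0 ≤ K := by positivity
    obtain ⟨j, hjgt⟩ := exists_nat_gt (max 1 (K/ε))
    have hj1r : (1:ℝ) < j := lt_of_le_of_lt (le_max_left _ _) hjgt
    have hj1 : 1 ≤ j := by exact_mod_cast hj1r.le
    have hjpos : (0:ℝ) < j := lt_trans one_pos hj1r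
    have hKj : K / j < ε := by
      rw [div_lt_iff₀ hjpos]
      have h1 : K / ε < j := lt_of_le_of_lt (le_max_right _ _) hjgt
      rw [div_lt_iff₀ hε] at h1
      linarith
    obtain ⟨X, h1, h2, h3, h4, h5, h6⟩ := aux_curve n t0 tf ht x0 x1 v0 v1 j hj1
    refine ⟨E X, ⟨X, h1, h2, h3, h4, h5, rfl⟩, ?_⟩
    rw [hE X]
    have heq : 2*(‖v0 - (tf - t0)⁻¹ • (x1 - x0)‖^2 + ‖v1 - (tf - t0)⁻¹ • (x1 - x0)‖^2)
        * ((tf - t0)/(j:ℝ)) = K / j := by rw [hK]; ring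
    rw [heq] at h6
    linarith
  have hne : {e : ℝ | ∃ x : ℝ → EuclideanSpace ℝ (Fin n), ContDiff ℝ (⊤ : ℕ∞) x ∧
      x t0 = x0 ∧ x tf = x1 ∧ deriv x t0 = v0 ∧ deriv x tf = v1 ∧ E x = e}.Nonempty := by
    obtain ⟨e, he, _⟩ := hmem 1 one_pos
    exact ⟨e, he⟩
  have hlb : ∀ e ∈ {e : ℝ | ∃ x : ℝ → EuclideanSpace ℝ (Fin n), ContDiff ℝ (⊤ : ℕ∞) x ∧
      x t0 = x0 ∧ x tf = x1 ∧ deriv x t0 = v0 ∧ deriv x tf = v1 ∧ E x = e},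
      ‖x1 - x0‖ ^ 2 / (tf - t0) ≤ e := by
    rintro e ⟨x, hx, h0, h1, _, _, rfl⟩
    exact hlow x hx h0 h1
  refine ⟨?_, ?_, ?_⟩
  · apply le_antisymm
    · apply le_of_forall_pos_le_add
      intro ε hε
      obtain ⟨e, heS, hle⟩ := hmem ε hε
      exact (csInf_le ⟨_, hlb⟩ heS).trans hle
    · exact le_csInf hne hlb
  · rintro ⟨x, hx, h0, h1, hd0, hd1, hEx⟩
    rw [hE x, aux_energy t0 tf ht x hx x0 x1 h0 h1] at hEx
    have hzero : (∫ t in t0..tf, ‖deriv x t - (tf - t0)⁻¹ • (x1 - x0)‖ ^ 2) = 0 := by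
      linarith
    have hcont : Continuous (fun t => ‖deriv x t - (tf - t0)⁻¹ • (x1 - x0)‖ ^ 2) :=
      (((hx.continuous_deriv (by simp)).sub continuous_const).norm.pow 2)
    have hnn : ∀ t, 0 ≤ ‖deriv x t - (tf - t0)⁻¹ • (x1 - x0)‖ ^ 2 := fun t => by positivity
    have h00 := aux_zero hcont hnn ht hzero t0 (left_mem_Icc.2 ht.le)
    have h11 := aux_zero hcont hnn ht hzero tf (right_mem_Icc.2 ht.le)
    rw [hd0] at h00
    rw [hd1] at h11
    have e0 : v0 = (tf - t0)⁻¹ • (x1 - x0) := by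
      have h := (pow_eq_zero_iff two_ne_zero).mp h00
      rwa [norm_eq_zero, sub_eq_zero] at h
    have e1 : v1 = (tf - t0)⁻¹ • (x1 - x0) := by
      have h := (pow_eq_zero_iff two_ne_zero).mp h11
      rwa [norm_eq_zero, sub_eq_zero] at h
    rcases hv with hv | hv
    · exact hv e0
    · exact hv e1
  · exact ⟨_, hyC, hy0, hy1, hyE, fun z hz hz0 hz1 => hlow z hz hz0 hz1⟩
end
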